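/- arXiv:2303.14338 — 2 statements merged into one kernel-verified Lean document; each statement's English description precedes it below -/
import Mathlib

section
/- In any cartesian closed category, if L is an object equipped with, for each pair of objects A, B, a morphism ev : L × A → B such that every morphism f : A → B factors as f = ev ∘ ⟨⌜f⌝ ∘ !, id⟩ for some point ⌜f⌝ : 1 → L, and additionally every morphism g : L × A → B has a code, then every such g has a fixpoint: a point Γ : 1 → L with g ∘ ⟨Γ ∘ !, id⟩ = ev ∘ ⟨Γ ∘ !, id⟩ (assuming a specializer s : L × 1 → L satisfying the specialization equation). -/
open CategoryTheory MonoidalCategory CartesianMonoidalCategory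

/-!
Lawvere's diagonal argument. Let `δ : L ⟶ L` be the specializer `s : L ⊗ L ⟶ L` precomposed with
the diagonal, so that the point `δ G` is `G` specialized to its own code. Coding the
self-application `(p, a) ↦ g (δ p, a)` by a point `G`, the point `Γ = δ G` is a fixpoint of `g`:
running `G` on `(G, a)` is both `g (Γ, a)` (by the choice of `G`) and, by specialization,
`ev (Γ, a)`.
-/

namespace CategoryTheory.CartesianMonoidalCategory

variable {C : Type*} [Category C] [CartesianMonoidalCategory C]

lemma lift_toUnit_comp_tensorHom_id {X Y : C} (A : C) (p : 𝟙_ C ⟶ X) (f : X ⟶ Y) :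
    lift (toUnit A ≫ p) (𝟙 A) ≫ (f ⊗ₘ 𝟙 A) = lift (toUnit A ≫ p ≫ f) (𝟙 A) := by
  ext <;> simp

lemma lift_toUnit_lift_comp_associator_hom {X Y : C} (A : C) (p : 𝟙_ C ⟶ X) (q : 𝟙_ C ⟶ Y) :
    lift (toUnit A ≫ lift p q) (𝟙 A) ≫ (α_ X Y A).hom =
      lift (toUnit A ≫ q) (𝟙 A) ≫ lift (toUnit (Y ⊗ A) ≫ p) (𝟙 (Y ⊗ A)) := by
  ext <;> simp

lemma comp_eq_comp_ev_of_specializer {L A B : C} (ev : L ⊗ A ⟶ B) (ev' : L ⊗ (L ⊗ A) ⟶ B)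
    (s : L ⊗ L ⟶ L) (hs : (s ⊗ₘ 𝟙 A) ≫ ev = (α_ L L A).hom ≫ ev') (g : L ⊗ A ⟶ B)
    (G : 𝟙_ C ⟶ L)
    (hG : ((lift (𝟙 L) (𝟙 L) ≫ s) ⊗ₘ 𝟙 A) ≫ g =
      lift (toUnit (L ⊗ A) ≫ G) (𝟙 (L ⊗ A)) ≫ ev') :
    lift (toUnit A ≫ lift G G ≫ s) (𝟙 A) ≫ g = lift (toUnit A ≫ lift G G ≫ s) (𝟙 A) ≫ ev := by
  have hdiag : G ≫ lift (𝟙 L) (𝟙 L) ≫ s = lift G G ≫ s := by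
    rw [← Category.assoc, comp_lift, Category.comp_id]
  calc lift (toUnit A ≫ lift G G ≫ s) (𝟙 A) ≫ g
      = lift (toUnit A ≫ G) (𝟙 A) ≫ ((lift (𝟙 L) (𝟙 L) ≫ s) ⊗ₘ 𝟙 A) ≫ g := by
        rw [← hdiag, reassoc_of% lift_toUnit_comp_tensorHom_id]
    _ = lift (toUnit A ≫ lift G G) (𝟙 A) ≫ (α_ L L A).hom ≫ ev' := by
        rw [hG, reassoc_of% lift_toUnit_lift_comp_associator_hom]
    _ = lift (toUnit A ≫ lift G G ≫ s) (𝟙 A) ≫ ev := by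
        rw [← hs, reassoc_of% lift_toUnit_comp_tensorHom_id]

end CategoryTheory.CartesianMonoidalCategory

theorem stmt_0_general {C : Type*} [Category C] [CartesianMonoidalCategory C]
    (L : C) (ev : ∀ A B : C, L ⊗ A ⟶ B)
    (hcode : ∀ (A B : C) (g : L ⊗ A ⟶ B), ∃ G : 𝟙_ C ⟶ L,
      g = lift (toUnit (L ⊗ A) ≫ G) (𝟙 (L ⊗ A)) ≫ ev (L ⊗ A) B)
    (hspec : ∀ X A B : C, ∃ s : L ⊗ X ⟶ L,
      (s ⊗ₘ 𝟙 A) ≫ ev A B = (α_ L X A).hom ≫ ev (X ⊗ A) B) :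
    ∀ (A B : C) (g : L ⊗ A ⟶ B), ∃ Γ : 𝟙_ C ⟶ L,
      lift (toUnit A ≫ Γ) (𝟙 A) ≫ g = lift (toUnit A ≫ Γ) (𝟙 A) ≫ ev A B := by
  intro A B g
  obtain ⟨s, hs⟩ := hspec L A B
  obtain ⟨G, hG⟩ := hcode A B (((lift (𝟙 L) (𝟙 L) ≫ s) ⊗ₘ 𝟙 A) ≫ g)
  exact ⟨lift G G ≫ s, comp_eq_comp_ev_of_specializer _ _ s hs g G hG⟩

/-- Diagonalization from universality and specialization: in a cartesian closed
category, an object `L` with universal interpreters `ev A B : L × A ⟶ B`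
(every `f : A ⟶ B` has a point-code, and every `g : L × A ⟶ B` has a code)
and specializers yields a fixpoint point `Γ` for every `g : L × A ⟶ B`. -/
theorem stmt_0 {C : Type*} [Category C] [CartesianMonoidalCategory C] [MonoidalClosed C]
    (L : C) (ev : ∀ A B : C, L ⊗ A ⟶ B)
    (huniv : ∀ (A B : C) (f : A ⟶ B), ∃ code : 𝟙_ C ⟶ L,
      f = lift (toUnit A ≫ code) (𝟙 A) ≫ ev A B)
    (hcode : ∀ (A B : C) (g : L ⊗ A ⟶ B), ∃ G : 𝟙_ C ⟶ L,
      g = lift (toUnit (L ⊗ A) ≫ G) (𝟙 (L ⊗ A)) ≫ ev (L ⊗ A) B)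
    (hspec : ∀ X A B : C, ∃ s : L ⊗ X ⟶ L,
      (s ⊗ₘ 𝟙 A) ≫ ev A B = (α_ L X A).hom ≫ ev (X ⊗ A) B) :
    ∀ (A B : C) (g : L ⊗ A ⟶ B), ∃ Γ : 𝟙_ C ⟶ L,
      lift (toUnit A ≫ Γ) (𝟙 A) ≫ g = lift (toUnit A ≫ Γ) (𝟙 A) ≫ ev A B :=
  stmt_0_general L ev hcode hspec
end

section
/- Lawvere's fixed point theorem: in a cartesian closed category, if there exists a point-surjective morphism φ : A → (A ⇒ B) (i.e., for every f : A → B there is a point a : 1 → A with φ(a) = ⌜f⌝ as an element of A ⇒ B), then every endomorphism t : B → B has a fixed point, i.e., a point b : 1 → B with t ∘ b = b. -/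
/-!
Let `δ : A ⟶ B` be the diagonal `a ↦ φ(a)(a)`. Point-surjectivity gives a point `a` with
`φ(a) = t ∘ δ`; evaluating at `a` itself shows that `δ(a)` is a fixed point of `t`.
-/

open CategoryTheory MonoidalCategory CartesianMonoidalCategory CartesianClosed

namespace CategoryTheory.CartesianMonoidalCategory

variable {C : Type*} [Category C] [CartesianMonoidalCategory C]

lemma point_comp_lift_toUnit_comp {A Y Z : C} (a : 𝟙_ C ⟶ A) (f : A ⟶ Y) (g : A ⟶ Z) :
    a ≫ lift f (toUnit A ≫ a ≫ g) = a ≫ lift f g := by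
  rw [comp_lift, comp_lift, ← Category.assoc a, toUnit_unique (a ≫ toUnit A) (𝟙 _),
    Category.id_comp]

end CategoryTheory.CartesianMonoidalCategory

/-- Lawvere's fixed point theorem: if `φ : A ⟶ (A ⟹ B)` is point-surjective in
a cartesian closed category, then every endomorphism of `B` has a fixed point. -/
theorem stmt_1 {C : Type*} [Category C] [CartesianMonoidalCategory C] [MonoidalClosed C]
    {A B : C} (φ : A ⟶ (A ⟹ B))
    (hsurj : ∀ f : A ⟶ B, ∃ a : 𝟙_ C ⟶ A,
      lift (𝟙 A) (toUnit A ≫ a ≫ φ) ≫ (ihom.ev A).app B = f) :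
    ∀ t : B ⟶ B, ∃ b : 𝟙_ C ⟶ B, b ≫ t = b := by
  intro t
  set δ : A ⟶ B := lift (𝟙 A) φ ≫ (ihom.ev A).app B
  obtain ⟨a, ha⟩ := hsurj (δ ≫ t)
  refine ⟨a ≫ δ, ?_⟩
  calc (a ≫ δ) ≫ t = a ≫ lift (𝟙 A) (toUnit A ≫ a ≫ φ) ≫ (ihom.ev A).app B := by
        rw [ha, Category.assoc]
    _ = a ≫ δ := by rw [← Category.assoc, point_comp_lift_toUnit_comp, Category.assoc]
end
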